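/- Let X₁ ⊆ X and Y₁ ⊆ Y have the extension property in topological spaces X and Y respectively, e : X₁ → Y₁ a homeomorphism, E = {(x, e(x)) : x ∈ X₁}, and g : E → ℝ a function of the first Baire class. If E is pseudocompact, then there exists a separately continuous function f : X × Y → ℝ with f|_E = g. -/

import Mathlib

/-!
Pseudocompactness of `E` bounds the continuous approximants `gₙ` of `g`, so the extension
property extends them, along `x ↦ (x, e x)` and along its inverse, to continuous maps
`U : X → ℝ^ℕ` and `V : Y → ℝ^ℕ` that agree with `p ↦ (gₙ p)ₙ` on `E`. Pseudocompactness also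
forces every sequence in the closure `S` of the image of `E` in `ℝ^ℕ` to converge; as `ℝ^ℕ` is
perfectly normal, some continuous `τ : ℝ^ℕ → ℝ^ℕ` fixes `S` and takes only convergent values.

On pairs of sequences, let `Φ(a, b)` be the piecewise linear interpolation of `a` at a height
given by the distance from `a` to `b`. It is continuous in `b` when `a` converges, continuous in
`a` when `b` converges, and `Φ(a, a) = lim a`. Then `f (x, y) = Φ(τ (U x), τ (V y))`.
-/

open Set Filter Topology

noncomputable def ramp (a b t : ℝ) : ℝ := max 0 (min 1 ((t - a) / (b - a)))

@[fun_prop]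
lemma continuous_ramp (a b : ℝ) : Continuous (ramp a b) := by
  unfold ramp; fun_prop

lemma ramp_mem_Icc (a b t : ℝ) : ramp a b t ∈ Icc 0 1 :=
  ⟨le_max_left _ _, max_le zero_le_one (min_le_left _ _)⟩

lemma ramp_of_le {a b t : ℝ} (hab : a < b) (ht : t ≤ a) : ramp a b t = 0 :=
  max_eq_left <| (min_le_right _ _).trans <|
    div_nonpos_of_nonpos_of_nonneg (sub_nonpos.2 ht) (sub_pos.2 hab).le

lemma ramp_of_ge {a b t : ℝ} (hab : a < b) (ht : b ≤ t) : ramp a b t = 1 := by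
  have : 1 ≤ (t - a) / (b - a) := by rw [le_div_iff₀ (sub_pos.2 hab)]; linarith
  rw [ramp, min_eq_left this, max_eq_right zero_le_one]


def IsPseudocompact (A : Type*) [TopologicalSpace A] : Prop :=
  ∀ u : A → ℝ, Continuous u → ∃ M, ∀ a, |u a| ≤ M

theorem IsPseudocompact.exists_forall_exists_ne_one {A : Type*} [TopologicalSpace A]
    (hA : IsPseudocompact A) {β : ℕ → A → ℝ} (hβ : ∀ i, Continuous (β i))
    (hβ₀ : ∀ i a, 0 ≤ β i a) (hloc : ∀ a, ∃ i, ∀ᶠ b in 𝓝 a, β i b = 0) :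
    ∃ m, ∀ a, ∃ j ≤ m, β j a ≠ 1 := by
  -- `∑ᶠ i, term i` is locally a finite sum, and it is at least `m` where `β 0, …, β m` all equal 1
  set term : ℕ → A → ℝ := fun i a => i * ∏ j ∈ Finset.range (i + 1), β j a
  have hlf : LocallyFinite fun i => Function.support (term i) := by
    intro a₀
    obtain ⟨N, hN⟩ := hloc a₀
    refine ⟨_, hN, (finite_lt_nat N).subset ?_⟩
    rintro i ⟨a, ha, ha'⟩
    simp only [mem_ofPred_eq]
    by_contra! hi
    exact ha (mul_eq_zero_of_right _ (Finset.prod_eq_zero (Finset.mem_range.2 (by omega)) ha'))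
  obtain ⟨C, hC⟩ := hA (fun a => ∑ᶠ i, term i a) (continuous_finsum (fun i => by fun_prop) hlf)
  obtain ⟨m, hm⟩ := exists_nat_gt C
  refine ⟨m, fun a => ?_⟩
  by_contra! hone
  have hterm : term m a = m := by
    simp only [term, Finset.prod_congr rfl fun j hj => hone j (Finset.mem_range_succ_iff.1 hj),
      Finset.prod_const_one, mul_one]
  have hle : term m a ≤ ∑ᶠ i, term i a :=
    single_le_finsum m (hlf.point_finite a) fun i =>
      mul_nonneg i.cast_nonneg (Finset.prod_nonneg fun j _ => hβ₀ j a)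
  linarith [le_abs_self (∑ᶠ i, term i a), hC a]

theorem IsPseudocompact.cauchySeq_of_mem_closure_range {A : Type*} [TopologicalSpace A]
    (hA : IsPseudocompact A) {G : A → ℕ → ℝ} (hG : Continuous G) (hGc : ∀ a, CauchySeq (G a))
    {z : ℕ → ℝ} (hz : z ∈ closure (range G)) : CauchySeq z := by
  rw [Metric.cauchySeq_iff]
  by_contra! hnc
  obtain ⟨ε, hε, hbad⟩ := hnc
  choose k hk l hl hkl using hbad
  -- `β i a = 1` when `G a` oscillates between `k i` and `l i` almost as much as `z` does,
  -- and `β i a = 0` once this oscillation drops below `ε / 2`, as it eventually does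
  set β : ℕ → A → ℝ := fun i a => ramp (ε / 2) (3 * ε / 4) (dist (G a (k i)) (G a (l i)))
  obtain ⟨m, hm⟩ := hA.exists_forall_exists_ne_one (β := β) (fun i => by fun_prop)
    (fun i a => (ramp_mem_Icc _ _ _).1) fun a₀ => by
      obtain ⟨N, hN⟩ := Metric.cauchySeq_iff.1 (hGc a₀) (ε / 2) (half_pos hε)
      refine ⟨N, ?_⟩
      filter_upwards [(isOpen_lt (f := fun a => dist (G a (k N)) (G a (l N))) (by fun_prop)
        continuous_const).mem_nhds (hN _ (hk N) _ (hl N))] with a ha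
      exact ramp_of_le (by linarith) ha.le
  have hV : ∀ᶠ w in 𝓝 z, ∀ j ∈ Finset.range (m + 1),
      dist (w (k j)) (z (k j)) < ε / 8 ∧ dist (w (l j)) (z (l j)) < ε / 8 :=
    (eventually_all_finset _).2 fun j _ =>
      (((continuous_apply (k j)).tendsto z).eventually (Metric.ball_mem_nhds _ (by positivity))).and
        (((continuous_apply (l j)).tendsto z).eventually (Metric.ball_mem_nhds _ (by positivity)))
  obtain ⟨_, hw, a, rfl⟩ := mem_closure_iff_nhds.1 hz _ hV
  obtain ⟨j, hj, hβj⟩ := hm a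
  refine hβj (ramp_of_ge (by linarith) ?_)
  have hwj := hw j (Finset.mem_range_succ_iff.2 hj)
  have := dist_triangle4 (z (k j)) (G a (k j)) (G a (l j)) (z (l j))
  rw [dist_comm (z (k j)) (G a (k j))] at this
  linarith [hkl j, hwj.1, hwj.2]

def HasUnitIntervalExtension {X : Type*} [TopologicalSpace X] (s : Set X) : Prop :=
  ∀ u : s → ℝ, Continuous u → (∀ a, u a ∈ Icc (0:ℝ) 1) →
    ∃ v : X → ℝ, Continuous v ∧ (∀ x, v x ∈ Icc (0:ℝ) 1) ∧ ∀ a : s, v a = u a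

theorem HasUnitIntervalExtension.exists_extension {X : Type*} [TopologicalSpace X] {s : Set X}
    (hs : HasUnitIntervalExtension s) {u : s → ℝ} (hu : Continuous u) {M : ℝ}
    (hM : ∀ a, |u a| ≤ M) : ∃ v : X → ℝ, Continuous v ∧ ∀ a : s, v a = u a := by
  set M' := |M| + 1
  have hM' : 0 < M' := by positivity
  have hlt : ∀ a, |u a| < M' := fun a => (hM a).trans_lt ((le_abs_self M).trans_lt (lt_add_one _))
  obtain ⟨w, hw, -, hwu⟩ := hs (fun a => (u a + M') / (2 * M')) (by fun_prop) fun a => by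
    obtain ⟨h₁, h₂⟩ := abs_lt.1 (hlt a)
    constructor
    · apply div_nonneg <;> linarith
    · rw [div_le_one (by positivity)]; linarith
  refine ⟨fun x => 2 * M' * w x - M', by fun_prop, fun a => ?_⟩
  simp only [hwu a]
  field_simp
  ring

theorem HasUnitIntervalExtension.exists_extension_pi {X : Type*} [TopologicalSpace X]
    {s : Set X} (hs : HasUnitIntervalExtension s) {u : s → ℕ → ℝ} (hu : Continuous u)
    (hM : ∀ n, ∃ M, ∀ a, |u a n| ≤ M) : ∃ v : X → ℕ → ℝ, Continuous v ∧ ∀ a : s, v a = u a := by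
  choose M hM using hM
  choose v hv hvu using fun n =>
    hs.exists_extension ((continuous_apply n).comp hu) (hM n)
  exact ⟨fun x n => v n x, continuous_pi hv, fun a => funext fun n => hvu n a⟩

theorem exists_continuous_eqOn_forall_tendsto {Z : Type*} [TopologicalSpace Z]
    [PerfectlyNormalSpace Z] {a : Z → ℕ → ℝ} (ha : Continuous a) {s : Set Z} (hs : IsClosed s)
    (hconv : ∀ z ∈ s, ∃ l, Tendsto (a z) atTop (𝓝 l)) :
    ∃ b : Z → ℕ → ℝ, Continuous b ∧ (∀ z, ∃ l, Tendsto (b z) atTop (𝓝 l)) ∧ EqOn b a s := by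
  obtain ⟨ρ, hρs, hρ⟩ :=
    perfectlyNormalSpace_iff_forall_isClosed_preimage_zero.1 ‹_› s hs
  set b : Z → ℕ → ℝ := fun z n => (1 - min 1 (n * ρ z)) * a z n
  have hb_of_mem : ∀ z ∈ s, b z = a z := by
    intro z hz
    rw [hρs] at hz
    simp [b, show ρ z = 0 from hz]
  refine ⟨b, continuous_pi fun n => by fun_prop, fun z => ?_, hb_of_mem⟩
  by_cases hz : z ∈ s
  · rw [hb_of_mem z hz]
    exact hconv z hz
  · have hρz : 0 < ρ z := (hρ z).1.lt_of_ne' (by rw [hρs] at hz; exact hz)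
    obtain ⟨N, hN⟩ := exists_nat_gt (ρ z)⁻¹
    refine ⟨0, tendsto_atTop_of_eventually_const (i₀ := N) fun n hn => ?_⟩
    have : 1 ≤ n * ρ z := by
      rw [← inv_le_iff_one_le_mul₀ hρz]
      exact hN.le.trans (Nat.cast_le.2 hn)
    simp [b, min_eq_left this]

noncomputable def dyadicInterpPartial (a : ℕ → ℝ) (r : ℝ) (N : ℕ) : ℝ :=
  a 0 + ∑ n ∈ Finset.range N, (1 - ramp (2⁻¹ ^ (n + 1)) (2⁻¹ ^ n) r) * (a (n + 1) - a n)

/-- The piecewise linear function of `r` with value `a n` at `r = 2⁻¹ ^ n`, equal to `a 0` for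
`r ≥ 1` and to `lim a` at `r = 0`. -/
noncomputable def dyadicInterp (a : ℕ → ℝ) (r : ℝ) : ℝ :=
  limUnder atTop (dyadicInterpPartial a r)

lemma two_inv_pow_succ_lt (n : ℕ) : (2⁻¹ : ℝ) ^ (n + 1) < 2⁻¹ ^ n :=
  pow_lt_pow_right_of_lt_one₀ (by norm_num) (by norm_num) n.lt_succ_self

lemma two_inv_pow_le_of_le {m n : ℕ} (h : m ≤ n) : (2⁻¹ : ℝ) ^ n ≤ 2⁻¹ ^ m :=
  pow_le_pow_of_le_one (by norm_num) (by norm_num) h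

@[fun_prop]
lemma continuous_dyadicInterpPartial (N : ℕ) :
    Continuous fun q : (ℕ → ℝ) × ℝ => dyadicInterpPartial q.1 q.2 N := by
  unfold dyadicInterpPartial; fun_prop

lemma dyadicInterpPartial_of_le {a : ℕ → ℝ} {r : ℝ} {n : ℕ} (h : r ≤ 2⁻¹ ^ n) :
    dyadicInterpPartial a r n = a n := by
  have hzero : ∀ j ∈ Finset.range n, (1 - ramp (2⁻¹ ^ (j + 1)) (2⁻¹ ^ j) r) * (a (j + 1) - a j)
      = a (j + 1) - a j := fun j hj => by
    rw [ramp_of_le (two_inv_pow_succ_lt j)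
      (h.trans (two_inv_pow_le_of_le (Finset.mem_range.1 hj))), sub_zero, one_mul]
  rw [dyadicInterpPartial, Finset.sum_congr rfl hzero, Finset.sum_range_sub]
  ring

lemma dyadicInterpPartial_eq_of_le {a : ℕ → ℝ} {r : ℝ} {N M : ℕ} (h : 2⁻¹ ^ N ≤ r)
    (hM : N ≤ M) : dyadicInterpPartial a r M = dyadicInterpPartial a r N := by
  obtain ⟨k, rfl⟩ := Nat.exists_eq_add_of_le hM
  have hzero : ∀ j ∈ Finset.range k, (1 - ramp (2⁻¹ ^ (N + j + 1)) (2⁻¹ ^ (N + j)) r) *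
      (a (N + j + 1) - a (N + j)) = 0 := fun j _ => by
    rw [ramp_of_ge (two_inv_pow_succ_lt _) ((two_inv_pow_le_of_le (by omega)).trans h), sub_self,
      zero_mul]
  rw [dyadicInterpPartial, Finset.sum_range_add, Finset.sum_eq_zero hzero, add_zero]
  rfl

lemma dyadicInterp_eq_of_le {a : ℕ → ℝ} {r : ℝ} {N : ℕ} (h : 2⁻¹ ^ N ≤ r) :
    dyadicInterp a r = dyadicInterpPartial a r N :=
  (tendsto_atTop_of_eventually_const fun _ => dyadicInterpPartial_eq_of_le h).limUnder_eq

lemma dyadicInterp_zero {a : ℕ → ℝ} {l : ℝ} (ha : Tendsto a atTop (𝓝 l)) :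
    dyadicInterp a 0 = l := by
  have : dyadicInterpPartial a 0 = a :=
    funext fun n => dyadicInterpPartial_of_le (by positivity)
  rw [dyadicInterp, this, ha.limUnder_eq]

lemma dyadicInterp_of_mem {a : ℕ → ℝ} {r : ℝ} {n : ℕ} (h₁ : 2⁻¹ ^ (n + 1) ≤ r)
    (h₂ : r ≤ 2⁻¹ ^ n) :
    dyadicInterp a r = a n + (1 - ramp (2⁻¹ ^ (n + 1)) (2⁻¹ ^ n) r) * (a (n + 1) - a n) := by
  rw [dyadicInterp_eq_of_le h₁, dyadicInterpPartial, Finset.sum_range_succ, ← add_assoc]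
  congr 1
  exact dyadicInterpPartial_of_le h₂

theorem dyadicInterp_mem {a : ℕ → ℝ} {r : ℝ} {N : ℕ} {s : Set ℝ} (hs : IsClosed s)
    (hsc : Convex ℝ s) (hr : 0 ≤ r) (hN : r ≤ 2⁻¹ ^ N)
    (ha : r = 0 → ∃ l, Tendsto a atTop (𝓝 l))
    (h : ∀ n ≥ N, r ≤ 2⁻¹ ^ n → a n ∈ s ∧ a (n + 1) ∈ s) : dyadicInterp a r ∈ s := by
  rcases hr.eq_or_lt with rfl | hr
  · obtain ⟨l, hl⟩ := ha rfl
    rw [dyadicInterp_zero hl]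
    exact hs.mem_of_tendsto hl (eventually_atTop.2 ⟨N, fun n hn => (h n hn (by positivity)).1⟩)
  obtain ⟨n, hn₁, hn₂⟩ := exists_nat_pow_near_of_lt_one hr
    (hN.trans (pow_le_one₀ (by norm_num) (by norm_num))) (by norm_num : (0 : ℝ) < 2⁻¹)
    (by norm_num)
  have hNn : N ≤ n := by
    have := hn₁.trans_le hN
    rw [pow_lt_pow_iff_right_of_lt_one₀ (by norm_num) (by norm_num)] at this
    omega
  obtain ⟨h₁, h₂⟩ := h n hNn hn₂
  rw [dyadicInterp_of_mem hn₁.le hn₂, ← smul_eq_mul]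
  exact hsc.add_smul_sub_mem h₁ h₂ ⟨sub_nonneg.2 (ramp_mem_Icc _ _ _).2,
    sub_le_self _ (ramp_mem_Icc _ _ _).1⟩

open scoped PiCountable

/-- Here `dist a b = ∑' i, min (2⁻¹ ^ i) |a i - b i|`. The factor `4` ensures
`|a k - b k| ≤ dist a b` for the two indices `k = n, n + 1` interpolated at that height. -/
noncomputable def diagExtension (a b : ℕ → ℝ) : ℝ := dyadicInterp a (4 * dist a b)

lemma dist_apply_le_of_four_mul_dist_le {a b : ℕ → ℝ} {n k : ℕ} (h : 4 * dist a b ≤ 2⁻¹ ^ n)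
    (hk : k ≤ n + 1) : dist (a k) (b k) ≤ dist a b := by
  refine PiCountable.dist_le_dist_pi_of_dist_lt ?_
  rw [Encodable.encode_nat]
  calc dist a b ≤ 2⁻¹ ^ n / 4 := by linarith
    _ < 2⁻¹ ^ (n + 1) := by rw [pow_succ]; linarith [pow_pos (by norm_num : (0 : ℝ) < 2⁻¹) n]
    _ ≤ 2⁻¹ ^ k := two_inv_pow_le_of_le hk

lemma seq_eq_of_dist_eq_zero {a b : ℕ → ℝ} (h : dist a b = 0) : a = b :=
  @eq_of_dist_eq_zero _ PiCountable.metricSpace a b h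

lemma diagExtension_self {a : ℕ → ℝ} {l : ℝ} (ha : Tendsto a atTop (𝓝 l)) :
    diagExtension a a = l := by
  rw [diagExtension, dist_self, mul_zero, dyadicInterp_zero ha]

lemma continuousAt_diagExtension_of_pos {a b : ℕ → ℝ} (hab : 0 < dist a b) :
    ContinuousAt (fun p : (ℕ → ℝ) × (ℕ → ℝ) => diagExtension p.1 p.2) (a, b) := by
  obtain ⟨N, hN⟩ := exists_pow_lt_of_lt_one (by positivity : 0 < 4 * dist a b)
    (by norm_num : (2⁻¹ : ℝ) < 1)
  have hcont : Continuous fun p : (ℕ → ℝ) × (ℕ → ℝ) =>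
      dyadicInterpPartial p.1 (4 * dist p.1 p.2) N :=
    (continuous_dyadicInterpPartial N).comp (continuous_fst.prodMk (by fun_prop))
  refine hcont.continuousAt.congr ?_
  filter_upwards [(isOpen_lt (g := fun p : (ℕ → ℝ) × (ℕ → ℝ) => 4 * dist p.1 p.2)
    continuous_const (by fun_prop)).mem_nhds hN] with p hp
  exact (dyadicInterp_eq_of_le hp.le).symm

theorem continuous_diagExtension_right {a : ℕ → ℝ} (ha : ∃ l, Tendsto a atTop (𝓝 l)) :
    Continuous (diagExtension a) := by
  refine continuous_iff_continuousAt.2 fun b₀ => ?_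
  rcases (dist_nonneg (x := a) (y := b₀)).eq_or_lt with h₀ | hpos
  · obtain rfl := seq_eq_of_dist_eq_zero h₀.symm
    obtain ⟨l, hl⟩ := ha
    rw [ContinuousAt, diagExtension_self hl, Metric.nhds_basis_closedBall.tendsto_right_iff]
    intro δ hδ
    obtain ⟨N, hN⟩ := eventually_atTop.1 (Metric.nhds_basis_closedBall.tendsto_right_iff.1 hl δ hδ)
    have h4 : 4 * dist a a < (2⁻¹ : ℝ) ^ N := by simp
    filter_upwards [(isOpen_lt (f := fun b => 4 * dist a b) (by fun_prop)
      continuous_const).mem_nhds h4] with b hb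
    exact dyadicInterp_mem Metric.isClosed_closedBall (convex_closedBall l δ) (by positivity) hb.le
      (fun _ => ⟨l, hl⟩) fun n hn _ => ⟨hN n hn, hN (n + 1) (by omega)⟩
  · exact (continuousAt_diagExtension_of_pos hpos).comp₂ continuousAt_const continuousAt_id

theorem continuous_diagExtension_left {b : ℕ → ℝ} (hb : ∃ l, Tendsto b atTop (𝓝 l)) :
    Continuous fun a => diagExtension a b := by
  refine continuous_iff_continuousAt.2 fun a₀ => ?_
  rcases (dist_nonneg (x := a₀) (y := b)).eq_or_lt with h₀ | hpos
  · obtain rfl := seq_eq_of_dist_eq_zero h₀.symm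
    obtain ⟨l, hl⟩ := hb
    rw [ContinuousAt, diagExtension_self hl, Metric.nhds_basis_closedBall.tendsto_right_iff]
    intro δ hδ
    obtain ⟨N, hN⟩ := eventually_atTop.1
      ((Metric.nhds_basis_closedBall.tendsto_right_iff.1 hl (δ / 2) (half_pos hδ)).and
        ((tendsto_pow_atTop_nhds_zero_of_lt_one (by norm_num)
          (by norm_num : (2⁻¹ : ℝ) < 1)).eventually (ge_mem_nhds hδ)))
    have h4 : 4 * dist a₀ a₀ < (2⁻¹ : ℝ) ^ N := by simp
    filter_upwards [(isOpen_lt (f := fun a => 4 * dist a a₀) (by fun_prop)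
      continuous_const).mem_nhds h4] with a ha
    refine dyadicInterp_mem Metric.isClosed_closedBall (convex_closedBall l δ) (by positivity) ha.le
      (fun h => ⟨l, seq_eq_of_dist_eq_zero ((mul_eq_zero.1 h).resolve_left four_ne_zero) ▸ hl⟩)
      fun n hn hrn => ?_
    have hclose : ∀ k, n ≤ k → k ≤ n + 1 → a k ∈ Metric.closedBall l δ := fun k hnk hk => by
      have h₁ := dist_apply_le_of_four_mul_dist_le hrn hk
      have h₂ : dist (a₀ k) l ≤ δ / 2 := (hN k (by omega)).1
      have h₃ := (hN N le_rfl).2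
      rw [Metric.mem_closedBall]
      linarith [dist_triangle (a k) (a₀ k) l]
    exact ⟨hclose n le_rfl n.le_succ, hclose (n + 1) n.le_succ le_rfl⟩
  · exact (continuousAt_diagExtension_of_pos hpos).comp₂ continuousAt_id continuousAt_const

theorem stmt7 {X Y : Type*} [TopologicalSpace X] [TopologicalSpace Y]
    (X₁ : Set X) (Y₁ : Set Y)
    (hX₁ : ∀ u : X₁ → ℝ, Continuous u → (∀ a, u a ∈ Icc (0:ℝ) 1) →
      ∃ v : X → ℝ, Continuous v ∧ (∀ x, v x ∈ Icc (0:ℝ) 1) ∧ ∀ a : X₁, v a = u a)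
    (hY₁ : ∀ u : Y₁ → ℝ, Continuous u → (∀ b, u b ∈ Icc (0:ℝ) 1) →
      ∃ v : Y → ℝ, Continuous v ∧ (∀ y, v y ∈ Icc (0:ℝ) 1) ∧ ∀ b : Y₁, v b = u b)
    (e : X₁ ≃ₜ Y₁)
    (E : Set (X × Y)) (hE : E = {p : X × Y | ∃ x : X₁, p = ((x : X), (e x : Y))})
    (g : E → ℝ)
    (hg : ∃ gs : ℕ → E → ℝ, (∀ n, Continuous (gs n)) ∧
      ∀ p : E, Tendsto (fun n => gs n p) atTop (𝓝 (g p)))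
    (hEpc : ∀ u : E → ℝ, Continuous u → ∃ M : ℝ, ∀ p : E, |u p| ≤ M) :
    ∃ f : X × Y → ℝ,
      (∀ x : X, Continuous fun y => f (x, y)) ∧
      (∀ y : Y, Continuous fun x => f (x, y)) ∧
      (∀ p : E, f p = g p) := by
  obtain ⟨gs, hgs, hlim⟩ := hg
  subst hE
  set G : _ → ℕ → ℝ := fun p n => gs n p
  have hG : Continuous G := continuous_pi hgs
  set ι : X₁ → {p : X × Y | ∃ x : X₁, p = ((x : X), (e x : Y))} := fun x => ⟨(x, e x), x, rfl⟩
  have hι : Continuous ι := by fun_prop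
  have hbdd : ∀ n, ∃ M, ∀ p, |G p n| ≤ M := fun n => hEpc (gs n) (hgs n)
  obtain ⟨U, hU, hUG⟩ := HasUnitIntervalExtension.exists_extension_pi hX₁ (hG.comp hι)
    fun n => (hbdd n).imp fun M hM a => hM (ι a)
  obtain ⟨V, hV, hVG⟩ := HasUnitIntervalExtension.exists_extension_pi hY₁
    (hG.comp (hι.comp e.symm.continuous)) fun n => (hbdd n).imp fun M hM b => hM (ι (e.symm b))
  obtain ⟨τ, hτ, hτconv, hτG⟩ := exists_continuous_eqOn_forall_tendsto continuous_id
    isClosed_closure fun z hz => cauchySeq_tendsto_of_complete <|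
      IsPseudocompact.cauchySeq_of_mem_closure_range hEpc hG (fun p => (hlim p).cauchySeq) hz
  refine ⟨fun q => diagExtension (τ (U q.1)) (τ (V q.2)),
    fun x => (continuous_diagExtension_right (hτconv (U x))).comp (hτ.comp hV),
    fun y => (continuous_diagExtension_left (hτconv (V y))).comp (hτ.comp hU), ?_⟩
  rintro ⟨_, x, rfl⟩
  have hVx : V (e x) = G (ι x) := by
    simp only [hVG (e x), Function.comp_apply, Homeomorph.symm_apply_apply]
  simp only [hUG x, hVx, Function.comp_apply, hτG (subset_closure (mem_range_self _)), id]
  exact diagExtension_self (hlim _)
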